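/- Let Δ be a fan in ℝ^n and let τ₀ ⊊ τ₁ ⊊ ⋯ ⊊ τ_k be a flag in Δ with τ₀ ≠ {0}. Then the vectors v_{τ₀}, v_{τ₁}, …, v_{τ_k} are linearly independent in ℝ^n. -/

import Mathlib

open scoped RealInnerProductSpace

noncomputable section

abbrev Euc (n : ℕ) := EuclideanSpace ℝ (Fin n)

/-- A vector of `ℝ^n` has integral coordinates. -/
def IsIntegralVec {n : ℕ} (x : Euc n) : Prop := ∀ i, ∃ m : ℤ, x i = (m : ℝ)

/-- A rational polyhedral cone in `ℝ^n`. -/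
def IsRatPolyCone {n : ℕ} (σ : Set (Euc n)) : Prop :=
  ∃ (k : ℕ) (v : Fin k → Euc n), (∀ i, IsIntegralVec (v i)) ∧
    σ = {x | ∃ lam : Fin k → ℝ, (∀ i, 0 ≤ lam i) ∧ x = ∑ i, lam i • v i}

/-- Strict convexity of a cone: `σ ∩ (−σ) = {0}`. -/
def IsStrictlyConvexCone {n : ℕ} (σ : Set (Euc n)) : Prop := σ ∩ (-σ) = {0}

/-- The dual cone. -/
def dualCone {n : ℕ} (σ : Set (Euc n)) : Set (Euc n) := {u | ∀ x ∈ σ, 0 ≤ ⟪u, x⟫}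

/-- The orthogonal of a cone. -/
def orthCone {n : ℕ} (σ : Set (Euc n)) : Set (Euc n) := {u | ∀ x ∈ σ, ⟪u, x⟫ = 0}

/-- `τ` is a face of `σ`. -/
def IsFaceOf {n : ℕ} (τ σ : Set (Euc n)) : Prop :=
  ∃ u ∈ dualCone σ, τ = σ ∩ {x | ⟪u, x⟫ = 0}

/-- The dimension of a cone: the dimension of its linear span. -/
def coneDim {n : ℕ} (σ : Set (Euc n)) : ℕ := Module.finrank ℝ (Submodule.span ℝ σ)

/-- A fan in `ℝ^n`. -/
structure IsFan {n : ℕ} (Δ : Set (Set (Euc n))) : Prop where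
  finite : Δ.Finite
  poly : ∀ σ ∈ Δ, IsRatPolyCone σ
  strictconv : ∀ σ ∈ Δ, IsStrictlyConvexCone σ
  face_mem : ∀ σ ∈ Δ, ∀ τ, IsFaceOf τ σ → τ ∈ Δ
  inter_face : ∀ σ ∈ Δ, ∀ τ ∈ Δ, IsFaceOf (σ ∩ τ) σ ∧ IsFaceOf (σ ∩ τ) τ

/-- A complete fan: the union of the cones is everything. -/
def IsCompleteFan {n : ℕ} (Δ : Set (Set (Euc n))) : Prop :=
  IsFan Δ ∧ ⋃₀ Δ = Set.univ

/-- A flag `τ₀ ⊊ τ₁ ⊊ ⋯ ⊊ τ_k` of cones in the fan `Δ`, where each `τ_i`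
is a proper face of `τ_{i+1}`. -/
def IsFlag {n : ℕ} (Δ : Set (Set (Euc n))) {k : ℕ} (τ : Fin (k + 1) → Set (Euc n)) : Prop :=
  (∀ i, τ i ∈ Δ) ∧
    ∀ i : Fin k, IsFaceOf (τ i.castSucc) (τ i.succ) ∧ τ i.castSucc ≠ τ i.succ

/-- `v_σ`: the sum of the unit vectors `u_ρ` over the one-dimensional cones
`ρ ∈ Δ` that are faces of `σ`; here `u : Set (Euc n) → Euc n` is a choice of
the unit vector of each one-dimensional cone. -/
def vVec {n : ℕ} (Δ : Set (Set (Euc n))) (u : Set (Euc n) → Euc n)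
    (σ : Set (Euc n)) : Euc n :=
  ∑ᶠ ρ ∈ {ρ | ρ ∈ Δ ∧ IsFaceOf ρ σ ∧ coneDim ρ = 1}, u ρ

/-- The choice function `u` assigns to every one-dimensional cone of `Δ` the
unique unit vector it contains. -/
def IsUnitVecChoice {n : ℕ} (Δ : Set (Set (Euc n))) (u : Set (Euc n) → Euc n) : Prop :=
  ∀ ρ ∈ Δ, coneDim ρ = 1 → u ρ ∈ ρ ∧ ‖u ρ‖ = 1

/-!
For `m < k` let `w_m` cut `τ_m` out of `τ_k` as a face. Every ray of `τ_j` with `j ≤ m` lies in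
`τ_m`, so `⟪w_m, v_{τ_j}⟫ = 0`. For `j > m` the form `w_m` is positive somewhere on `τ_j`, and a
linear form positive somewhere on a strictly convex polyhedral cone is positive on one of its
rays, so `⟪w_m, v_{τ_j}⟫ > 0`. The same fact gives `v_{τ₀} ≠ 0`, and this triangular pattern
forces linear independence.

Rays are found by induction on the dimension: for `u` strictly positive on the cone, the face on
which `⟪w, ·⟫ / ⟪u, ·⟫` is maximal is nonzero, and for a suitable `w` it is proper.
-/

section

variable {n m : ℕ}

def coneOf (v : Fin m → Euc n) : Set (Euc n) :=
  {x | ∃ lam : Fin m → ℝ, (∀ i, 0 ≤ lam i) ∧ x = ∑ i, lam i • v i}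

def IsPolyCone (σ : Set (Euc n)) : Prop :=
  ∃ (m : ℕ) (v : Fin m → Euc n), σ = coneOf v

lemma IsRatPolyCone.isPolyCone {σ : Set (Euc n)} (h : IsRatPolyCone σ) : IsPolyCone σ :=
  let ⟨m, v, _, hσ⟩ := h
  ⟨m, v, hσ⟩

section coneOf

variable {v : Fin m → Euc n} {w x y : Euc n}

lemma generator_mem_coneOf (v : Fin m → Euc n) (i : Fin m) : v i ∈ coneOf v := by
  classical
  exact ⟨Pi.single i 1, fun j => by rw [Pi.single_apply]; positivity, by simp [Pi.single_apply]⟩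

lemma zero_mem_coneOf (v : Fin m → Euc n) : (0 : Euc n) ∈ coneOf v :=
  ⟨0, fun _ => le_rfl, by simp⟩

lemma smul_mem_coneOf {c : ℝ} (hc : 0 ≤ c) (hx : x ∈ coneOf v) : c • x ∈ coneOf v := by
  obtain ⟨lam, hlam, rfl⟩ := hx
  exact ⟨c • lam, fun i => mul_nonneg hc (hlam i), by simp [Finset.smul_sum, mul_smul]⟩

lemma add_mem_coneOf (hx : x ∈ coneOf v) (hy : y ∈ coneOf v) : x + y ∈ coneOf v := by
  obtain ⟨lam, hlam, rfl⟩ := hx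
  obtain ⟨mu, hmu, rfl⟩ := hy
  exact ⟨lam + mu, fun i => add_nonneg (hlam i) (hmu i),
    by simp [add_smul, Finset.sum_add_distrib]⟩

lemma exists_generator_ne_zero (hx : x ∈ coneOf v) (hx0 : x ≠ 0) : ∃ i, v i ≠ 0 := by
  by_contra! h
  obtain ⟨lam, -, rfl⟩ := hx
  simp [h] at hx0

lemma mem_dualCone_coneOf_iff : w ∈ dualCone (coneOf v) ↔ ∀ i, 0 ≤ ⟪w, v i⟫ := by
  refine ⟨fun hw i => hw _ (generator_mem_coneOf v i), ?_⟩
  rintro hw _ ⟨lam, hlam, rfl⟩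
  simp only [inner_sum, real_inner_smul_right]
  exact Finset.sum_nonneg fun i _ => mul_nonneg (hlam i) (hw i)

lemma inner_pos_of_mem_coneOf (hw : ∀ i, v i ≠ 0 → 0 < ⟪w, v i⟫) (hx : x ∈ coneOf v)
    (hx0 : x ≠ 0) : 0 < ⟪w, x⟫ := by
  obtain ⟨lam, hlam, rfl⟩ := hx
  obtain ⟨i, hi⟩ : ∃ i, lam i • v i ≠ 0 := by
    by_contra! h
    exact hx0 (Finset.sum_eq_zero fun i _ => h i)
  have hterm : ∀ j, 0 ≤ lam j * ⟪w, v j⟫ := fun j => by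
    rcases eq_or_ne (v j) 0 with h | h
    · simp [h]
    · exact mul_nonneg (hlam j) (hw j h).le
  simp only [inner_sum, real_inner_smul_right]
  refine Finset.sum_pos' (fun j _ => hterm j) ⟨i, Finset.mem_univ i, ?_⟩
  rw [smul_ne_zero_iff] at hi
  exact mul_pos ((hlam i).lt_of_ne' hi.1) (hw i hi.2)

lemma coneOf_inter_eq (hw : w ∈ dualCone (coneOf v)) :
    coneOf v ∩ {x | ⟪w, x⟫ = 0} = coneOf fun i => if ⟪w, v i⟫ = 0 then v i else 0 := by
  have hwv := mem_dualCone_coneOf_iff.1 hw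
  ext x
  constructor
  · rintro ⟨⟨lam, hlam, rfl⟩, hx⟩
    simp only [Set.mem_ofPred_eq, inner_sum, real_inner_smul_right] at hx
    have hzero := (Finset.sum_eq_zero_iff_of_nonneg fun i _ => mul_nonneg (hlam i) (hwv i)).1 hx
    refine ⟨lam, hlam, Finset.sum_congr rfl fun i _ => ?_⟩
    dsimp only
    split_ifs with h
    · rfl
    · simp [(mul_eq_zero.1 (hzero i (Finset.mem_univ i))).resolve_right h]
  · rintro ⟨lam, hlam, rfl⟩
    refine ⟨⟨fun i => if ⟪w, v i⟫ = 0 then lam i else 0,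
      fun i => by dsimp only; split_ifs <;> simp [hlam i],
      Finset.sum_congr rfl fun i _ => by dsimp only; split_ifs <;> simp⟩, ?_⟩
    simp only [Set.mem_ofPred_eq, inner_sum, real_inner_smul_right]
    exact Finset.sum_eq_zero fun i _ => by split_ifs with h <;> simp [h]

end coneOf

section faces

variable {σ τ ρ : Set (Euc n)} {x y : Euc n}

lemma isFaceOf_self (σ : Set (Euc n)) : IsFaceOf σ σ :=
  ⟨0, fun _ _ => by simp, by ext; simp⟩

lemma IsFaceOf.subset (h : IsFaceOf τ σ) : τ ⊆ σ := by
  obtain ⟨w, -, rfl⟩ := h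
  exact Set.inter_subset_left

lemma IsFaceOf.isPolyCone (hσ : IsPolyCone σ) (h : IsFaceOf τ σ) : IsPolyCone τ := by
  obtain ⟨m, v, rfl⟩ := hσ
  obtain ⟨w, hw, rfl⟩ := h
  exact ⟨m, _, coneOf_inter_eq hw⟩

lemma exists_mul_add_nonneg {ι : Type*} [Finite ι] {a b : ι → ℝ} (ha : ∀ i, 0 ≤ a i)
    (hb : ∀ i, a i = 0 → 0 ≤ b i) : ∃ N : ℝ, ∀ i, 0 ≤ N * a i + b i := by
  obtain ⟨N, hN⟩ := Finite.exists_le fun i => -b i / a i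
  refine ⟨N, fun i => ?_⟩
  rcases (ha i).eq_or_lt with h | h
  · simp [← h, hb i h.symm]
  · have := (div_le_iff₀ h).1 (hN i)
    linarith

/-- If `a` cuts `τ` out of `σ` and `b` cuts `ρ` out of `τ`, then `a + (N • a + b)` cuts `ρ`
out of `σ` as soon as `N • a + b` is nonnegative on the generators of `σ`. -/
lemma IsFaceOf.trans (hρτ : IsFaceOf ρ τ) (hτσ : IsFaceOf τ σ) (hσ : IsPolyCone σ) :
    IsFaceOf ρ σ := by
  obtain ⟨m, v, rfl⟩ := hσ
  obtain ⟨a, ha, rfl⟩ := hτσ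
  obtain ⟨b, hb, rfl⟩ := hρτ
  obtain ⟨N, hN⟩ := exists_mul_add_nonneg (mem_dualCone_coneOf_iff.1 ha)
    fun i hi => hb (v i) ⟨generator_mem_coneOf v i, hi⟩
  have hNab : N • a + b ∈ dualCone (coneOf v) := mem_dualCone_coneOf_iff.2 fun i => by
    simpa [inner_add_left, real_inner_smul_left] using hN i
  refine ⟨a + (N • a + b), fun x hx => ?_, ?_⟩
  · rw [inner_add_left]
    exact add_nonneg (ha x hx) (hNab x hx)
  ext x
  simp only [Set.mem_inter_iff, Set.mem_ofPred_eq]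
  constructor
  · rintro ⟨⟨hx, hax⟩, hbx⟩
    exact ⟨hx, by simp [inner_add_left, real_inner_smul_left, hax, hbx]⟩
  · rintro ⟨hx, h⟩
    rw [inner_add_left, add_eq_zero_iff_of_nonneg (ha x hx) (hNab x hx)] at h
    refine ⟨⟨hx, h.1⟩, ?_⟩
    simpa [inner_add_left, real_inner_smul_left, h.1] using h.2

lemma IsFaceOf.coneDim_lt (h : IsFaceOf τ σ) (hne : τ ≠ σ) : coneDim τ < coneDim σ := by
  obtain ⟨w, -, rfl⟩ := h
  have hker : Submodule.span ℝ (σ ∩ {x | ⟪w, x⟫ = 0}) ≤ LinearMap.ker (innerₗ _ w) :=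
    Submodule.span_le.2 fun x hx => hx.2
  refine Submodule.finrank_lt_finrank_of_lt
    (lt_of_le_of_ne (Submodule.span_mono Set.inter_subset_left) fun heq => hne ?_)
  exact Set.inter_eq_left.2 fun x hx => hker (heq ▸ Submodule.subset_span hx)

lemma IsStrictlyConvexCone.mono (hσ : IsStrictlyConvexCone σ) (hτσ : τ ⊆ σ)
    (h0 : (0 : Euc n) ∈ τ) : IsStrictlyConvexCone τ :=
  Set.Subset.antisymm (fun _ hx => hσ ▸ ⟨hτσ hx.1, hτσ hx.2⟩)
    (Set.singleton_subset_iff.2 ⟨h0, by simpa using h0⟩)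

lemma IsStrictlyConvexCone.eq_zero_of_add_eq_zero (hσ : IsStrictlyConvexCone σ) (hx : x ∈ σ)
    (hy : y ∈ σ) (hxy : x + y = 0) : x = 0 := by
  have : x ∈ σ ∩ -σ := ⟨hx, by rwa [Set.mem_neg, neg_eq_of_add_eq_zero_right hxy]⟩
  rwa [hσ] at this

lemma IsStrictlyConvexCone.convex_coneOf_diff_zero {v : Fin m → Euc n}
    (hσ : IsStrictlyConvexCone (coneOf v)) : Convex ℝ (coneOf v \ {0}) := by
  rintro x ⟨hx, hx0⟩ y ⟨hy, hy0⟩ a b ha hb hab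
  have hax := smul_mem_coneOf ha hx
  have hby := smul_mem_coneOf hb hy
  refine ⟨add_mem_coneOf hax hby, fun h => ?_⟩
  rw [Set.mem_singleton_iff] at h hx0 hy0
  have ha0 := (smul_eq_zero.1 (hσ.eq_zero_of_add_eq_zero hax hby h)).resolve_right hx0
  have hb0 := (smul_eq_zero.1 (hσ.eq_zero_of_add_eq_zero hby hax
    ((add_comm _ _).trans h))).resolve_right hy0
  simp [ha0, hb0] at hab

/-- `u` comes from a hyperplane separating `0` from the convex hull of the nonzero
generators. -/
lemma IsPolyCone.exists_inner_pos (hσ : IsPolyCone σ) (hsc : IsStrictlyConvexCone σ) :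
    ∃ u : Euc n, ∀ x ∈ σ, x ≠ 0 → 0 < ⟪u, x⟫ := by
  obtain ⟨m, v, rfl⟩ := hσ
  set S := Set.range v \ {0}
  have hS : convexHull ℝ S ⊆ coneOf v \ {0} :=
    convexHull_min (by rintro _ ⟨⟨i, rfl⟩, hi⟩; exact ⟨generator_mem_coneOf v i, hi⟩)
      hsc.convex_coneOf_diff_zero
  obtain ⟨f, c, hf0, hfS⟩ := geometric_hahn_banach_point_closed (convex_convexHull ℝ S)
    ((Set.finite_range v).sdiff.isCompact_convexHull (𝕜 := ℝ)).isClosed fun h => (hS h).2 rfl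
  refine ⟨(InnerProductSpace.toDual ℝ (Euc n)).symm f,
    fun x hx hx0 => inner_pos_of_mem_coneOf (fun i hi => ?_) hx hx0⟩
  rw [InnerProductSpace.toDual_symm_apply]
  have := hfS (v i) (subset_convexHull ℝ S ⟨⟨i, rfl⟩, hi⟩)
  rw [map_zero] at hf0
  linarith

end faces

section rays

variable {σ : Set (Euc n)} {u w x : Euc n}

lemma IsPolyCone.zero_mem (hσ : IsPolyCone σ) : (0 : Euc n) ∈ σ := by
  obtain ⟨m, v, rfl⟩ := hσ
  exact zero_mem_coneOf v

lemma IsPolyCone.exists_ne_zero (hσ : IsPolyCone σ) (h : σ ≠ {0}) : ∃ x ∈ σ, x ≠ 0 := by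
  by_contra! h'
  exact h (Set.eq_singleton_iff_unique_mem.2 ⟨hσ.zero_mem, h'⟩)

lemma coneDim_eq_zero_iff : coneDim σ = 0 ↔ ∀ x ∈ σ, x = 0 :=
  Submodule.finrank_eq_zero.trans Submodule.span_eq_bot

/-- `c` is the largest value of `⟪w, ·⟫ / ⟪u, ·⟫` on the nonzero generators of `σ`. -/
lemma IsPolyCone.exists_smul_sub_mem_dualCone (hσ : IsPolyCone σ)
    (hu : ∀ x ∈ σ, x ≠ 0 → 0 < ⟪u, x⟫) (hne : ∃ x ∈ σ, x ≠ 0) (w : Euc n) :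
    ∃ c : ℝ, c • u - w ∈ dualCone σ ∧ ∃ x ∈ σ, x ≠ 0 ∧ ⟪c • u - w, x⟫ = 0 := by
  classical
  obtain ⟨m, v, rfl⟩ := hσ
  obtain ⟨x, hx, hx0⟩ := hne
  have hvu : ∀ i, v i ≠ 0 → 0 < ⟪u, v i⟫ := fun i hi => hu _ (generator_mem_coneOf v i) hi
  obtain ⟨i₀, hi₀, hmax⟩ := Finset.exists_max_image (Finset.univ.filter fun i => v i ≠ 0)
    (fun i => ⟪w, v i⟫ / ⟪u, v i⟫)
    (let ⟨i, hi⟩ := exists_generator_ne_zero hx hx0; ⟨i, by simpa using hi⟩)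
  simp only [Finset.mem_filter, Finset.mem_univ, true_and] at hi₀ hmax
  refine ⟨⟪w, v i₀⟫ / ⟪u, v i₀⟫, mem_dualCone_coneOf_iff.2 fun i => ?_,
    v i₀, generator_mem_coneOf v i₀, hi₀, ?_⟩
  · rw [inner_sub_left, real_inner_smul_left, sub_nonneg]
    rcases eq_or_ne (v i) 0 with h | h
    · simp [h]
    · exact (div_le_iff₀ (hvu i h)).1 (hmax i h)
  · rw [inner_sub_left, real_inner_smul_left, div_mul_cancel₀ _ (hvu i₀ hi₀).ne', sub_self]

/-- Cut `σ` with `w = ⟪u, q⟫ • p - ⟪u, p⟫ • q` for points `p`, `q` on different rays: were the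
face all of `σ`, `⟪w, ·⟫` would be a multiple of `⟪u, ·⟫` on `σ`, which forces `⟪w, w⟫ = 0`. -/
lemma IsPolyCone.exists_isFaceOf_ne (hσ : IsPolyCone σ) (hsc : IsStrictlyConvexCone σ)
    (hdim : 2 ≤ coneDim σ) : ∃ τ, IsFaceOf τ σ ∧ τ ≠ σ ∧ ∃ x ∈ τ, x ≠ 0 := by
  obtain ⟨u, hu⟩ := hσ.exists_inner_pos hsc
  obtain ⟨x₀, hx₀, hx₀0⟩ : ∃ x ∈ σ, x ≠ 0 := by
    by_contra! h
    have := coneDim_eq_zero_iff.2 h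
    omega
  obtain ⟨p, hp, q, hq, hpq⟩ : ∃ p ∈ σ, ∃ q ∈ σ, ⟪u, q⟫ • p - ⟪u, p⟫ • q ≠ 0 := by
    by_contra! h
    have hle : Submodule.span ℝ σ ≤ ℝ ∙ x₀ := Submodule.span_le.2 fun x hx => by
      refine Submodule.mem_span_singleton.2 ⟨⟪u, x₀⟫⁻¹ * ⟪u, x⟫, ?_⟩
      rw [mul_smul, sub_eq_zero.1 (h x₀ hx₀ x hx), inv_smul_smul₀ (hu x₀ hx₀ hx₀0).ne']
    have := (Submodule.finrank_mono hle).trans_eq (finrank_span_singleton hx₀0)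
    unfold coneDim at hdim
    omega
  set w := ⟪u, q⟫ • p - ⟪u, p⟫ • q
  obtain ⟨c, hc, x, hx, hx0, hcx⟩ := hσ.exists_smul_sub_mem_dualCone hu ⟨x₀, hx₀, hx₀0⟩ w
  refine ⟨σ ∩ {x | ⟪c • u - w, x⟫ = 0}, ⟨_, hc, rfl⟩, fun h => hpq ?_, x, ⟨hx, hcx⟩, hx0⟩
  have hp' : ⟪c • u - w, p⟫ = 0 := Set.inter_eq_left.1 h hp
  have hq' : ⟪c • u - w, q⟫ = 0 := Set.inter_eq_left.1 h hq
  have hw : ⟪c • u - w, w⟫ = 0 := by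
    simp only [w, inner_sub_right, real_inner_smul_right, hp', hq', mul_zero, sub_zero]
  have hu : ⟪u, w⟫ = 0 := by
    simp only [w, inner_sub_right, real_inner_smul_right]
    ring
  rw [inner_sub_left, real_inner_smul_left, hu, mul_zero, zero_sub, neg_eq_zero] at hw
  exact inner_self_eq_zero.1 hw

lemma IsPolyCone.exists_isFaceOf_coneDim_eq_one (hσ : IsPolyCone σ)
    (hsc : IsStrictlyConvexCone σ) (hne : ∃ x ∈ σ, x ≠ 0) :
    ∃ ρ, IsFaceOf ρ σ ∧ coneDim ρ = 1 := by
  induction hd : coneDim σ using Nat.strong_induction_on generalizing σ with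
  | _ d ih =>
  obtain _ | _ | d := d
  · obtain ⟨x, hx, hx0⟩ := hne
    exact absurd (coneDim_eq_zero_iff.1 hd x hx) hx0
  · exact ⟨σ, isFaceOf_self σ, hd⟩
  obtain ⟨τ, hτσ, hne', hτ⟩ := hσ.exists_isFaceOf_ne hsc (by omega)
  have hτ_poly := hτσ.isPolyCone hσ
  obtain ⟨ρ, hρτ, hρ⟩ := ih _ (hd ▸ hτσ.coneDim_lt hne') hτ_poly
    (hsc.mono hτσ.subset hτ_poly.zero_mem) hτ rfl
  exact ⟨ρ, hρτ.trans hτσ hσ, hρ⟩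

/-- Take a ray of the face on which `⟪w, ·⟫ / ⟪u, ·⟫` is maximal, for `u` strictly positive on
`σ`; the maximum is positive. -/
lemma IsPolyCone.exists_ray_inner_pos (hσ : IsPolyCone σ) (hsc : IsStrictlyConvexCone σ)
    (hx : x ∈ σ) (hwx : 0 < ⟪w, x⟫) :
    ∃ ρ, IsFaceOf ρ σ ∧ coneDim ρ = 1 ∧ ∀ y ∈ ρ, y ≠ 0 → 0 < ⟪w, y⟫ := by
  obtain ⟨u, hu⟩ := hσ.exists_inner_pos hsc
  have hx0 : x ≠ 0 := by
    rintro rfl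
    simp at hwx
  obtain ⟨c, hc, z, hz, hz0, hcz⟩ := hσ.exists_smul_sub_mem_dualCone hu ⟨x, hx, hx0⟩ w
  have hcpos : 0 < c := by
    have := hc x hx
    rw [inner_sub_left, real_inner_smul_left, sub_nonneg] at this
    exact pos_of_mul_pos_left (hwx.trans_le this) (hu x hx hx0).le
  have hF : IsFaceOf (σ ∩ {y | ⟪c • u - w, y⟫ = 0}) σ := ⟨_, hc, rfl⟩
  have hF_poly := hF.isPolyCone hσ
  obtain ⟨ρ, hρF, hρ⟩ := hF_poly.exists_isFaceOf_coneDim_eq_one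
    (hsc.mono hF.subset hF_poly.zero_mem) ⟨z, ⟨hz, hcz⟩, hz0⟩
  refine ⟨ρ, hρF.trans hF hσ, hρ, fun y hy hy0 => ?_⟩
  obtain ⟨hyσ, hyc⟩ := hρF.subset hy
  rw [Set.mem_ofPred_eq, inner_sub_left, real_inner_smul_left, sub_eq_zero] at hyc
  exact hyc ▸ mul_pos hcpos (hu y hyσ hy0)

end rays

lemma linearIndependent_of_exists_linearMap {K V : Type*} [Field K] [AddCommGroup V]
    [Module K V] : ∀ {k : ℕ} {v : Fin (k + 1) → V}, v 0 ≠ 0 →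
      (∀ m : Fin k, ∃ f : V →ₗ[K] K, (∀ j ≤ m.castSucc, f (v j) = 0) ∧ f (v m.succ) ≠ 0) →
      LinearIndependent K v
  | 0, v, h0, _ => (linearIndependent_unique_iff (ι := Fin 1)).2 h0
  | k + 1, v, h0, hf => by
    rw [linearIndependent_finSucc']
    refine ⟨linearIndependent_of_exists_linearMap h0 fun m => ?_, fun hmem => ?_⟩
    · obtain ⟨f, hf0, hf1⟩ := hf m.castSucc
      exact ⟨f, fun j hj => hf0 _ (Fin.castSucc_le_castSucc_iff.2 hj), hf1⟩
    · obtain ⟨f, hf0, hf1⟩ := hf (Fin.last k)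
      have hker : Submodule.span K (Set.range (Fin.init v)) ≤ LinearMap.ker f :=
        Submodule.span_le.2 <| by
          rintro _ ⟨j, rfl⟩
          exact hf0 _ (Fin.castSucc_le_castSucc_iff.2 (Fin.le_last j))
      exact hf1 (hker hmem)

section fan

variable {Δ : Set (Set (Euc n))} {u : Set (Euc n) → Euc n} {σ : Set (Euc n)} {w x : Euc n}

lemma IsUnitVecChoice.mem (hu : IsUnitVecChoice Δ u) {ρ : Set (Euc n)}
    (hρ : ρ ∈ {ρ | ρ ∈ Δ ∧ IsFaceOf ρ σ ∧ coneDim ρ = 1}) : u ρ ∈ σ :=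
  hρ.2.1.subset (hu ρ hρ.1 hρ.2.2).1

lemma inner_vVec_eq_zero (hu : IsUnitVecChoice Δ u) (hw : w ∈ orthCone σ) :
    ⟪w, vVec Δ u σ⟫ = 0 :=
  finsum_mem_induction (fun y => ⟪w, y⟫ = 0) (inner_zero_right w)
    (fun y z hy hz => by rw [inner_add_right, hy, hz, add_zero]) fun _ hρ => hw _ (hu.mem hρ)

lemma inner_vVec_pos (hΔ : IsFan Δ) (hu : IsUnitVecChoice Δ u) (hσ : σ ∈ Δ)
    (hw : w ∈ dualCone σ) (hx : x ∈ σ) (hwx : 0 < ⟪w, x⟫) : 0 < ⟪w, vVec Δ u σ⟫ := by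
  obtain ⟨ρ, hρσ, hρ, hpos⟩ :=
    (hΔ.poly σ hσ).isPolyCone.exists_ray_inner_pos (hΔ.strictconv σ hσ) hx hwx
  have hρΔ := hΔ.face_mem σ hσ ρ hρσ
  have hS : {ρ | ρ ∈ Δ ∧ IsFaceOf ρ σ ∧ coneDim ρ = 1}.Finite :=
    hΔ.finite.subset fun _ h => h.1
  rw [vVec, finsum_mem_eq_finite_toFinset_sum _ hS, inner_sum,
    ← finsum_mem_eq_finite_toFinset_sum _ hS]
  refine finsum_cond_pos (fun _ hρ => hw _ (hu.mem hρ))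
    ⟨ρ, ⟨hρΔ, hρσ, hρ⟩, hpos _ (hu ρ hρΔ hρ).1 ?_⟩ (hS.subset Set.inter_subset_right)
  exact norm_ne_zero_iff.1 (by rw [(hu ρ hρΔ hρ).2]; exact one_ne_zero)

lemma vVec_ne_zero (hΔ : IsFan Δ) (hu : IsUnitVecChoice Δ u) (hσ : σ ∈ Δ) (hne : σ ≠ {0}) :
    vVec Δ u σ ≠ 0 := by
  have hσ_poly := (hΔ.poly σ hσ).isPolyCone
  obtain ⟨w, hw⟩ := hσ_poly.exists_inner_pos (hΔ.strictconv σ hσ)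
  obtain ⟨x, hx, hx0⟩ := hσ_poly.exists_ne_zero hne
  have hwσ : w ∈ dualCone σ := fun y hy => by
    rcases eq_or_ne y 0 with rfl | hy0
    · simp
    · exact (hw y hy hy0).le
  intro h
  simpa [h] using inner_vVec_pos hΔ hu hσ hwσ hx (hw x hx hx0)

lemma IsFlag.isFaceOf {k : ℕ} {τ : Fin (k + 1) → Set (Euc n)} (hτ : IsFlag Δ τ) (hΔ : IsFan Δ)
    {i j : Fin (k + 1)} (hij : i ≤ j) : IsFaceOf (τ i) (τ j) := by
  induction j using Fin.induction with
  | zero =>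
    rw [Fin.le_zero_iff.1 hij]
    exact isFaceOf_self _
  | succ m ih =>
    rcases hij.lt_or_eq with hlt | rfl
    · exact (ih (Fin.le_castSucc_iff.2 hlt)).trans (hτ.2 m).1 (hΔ.poly _ (hτ.1 _)).isPolyCone
    · exact isFaceOf_self _

end fan

end

/-- For a flag `τ₀ ⊊ τ₁ ⊊ ⋯ ⊊ τ_k` in a fan `Δ` with
`τ₀ ≠ {0}`, the vectors `v_{τ₀}, …, v_{τ_k}` are linearly independent. -/
theorem flag_vVec_linearIndependent {n k : ℕ}
    (Δ : Set (Set (Euc n))) (hΔ : IsFan Δ)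
    (u : Set (Euc n) → Euc n) (hu : IsUnitVecChoice Δ u)
    (τ : Fin (k + 1) → Set (Euc n)) (hflag : IsFlag Δ τ)
    (h0 : τ 0 ≠ ({0} : Set (Euc n))) :
    LinearIndependent ℝ fun i => vVec Δ u (τ i) := by
  refine linearIndependent_of_exists_linearMap (vVec_ne_zero hΔ hu (hflag.1 0) h0) fun m => ?_
  have hlast : ∀ i, τ i ⊆ τ (Fin.last k) := fun i => (hflag.isFaceOf hΔ (Fin.le_last i)).subset
  obtain ⟨w, hw, hτm⟩ := hflag.isFaceOf hΔ (Fin.le_last m.castSucc)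
  obtain ⟨x, hx, hxm⟩ := Set.not_subset.1 fun h =>
    (hflag.2 m).2 ((hflag.2 m).1.subset.antisymm h)
  refine ⟨innerₗ _ w, fun j hj => inner_vVec_eq_zero hu fun y hy => ?_,
    (inner_vVec_pos hΔ hu (hflag.1 _) (fun y hy => hw y (hlast _ hy)) hx ?_).ne'⟩
  · have hy' := (hflag.isFaceOf hΔ hj).subset hy
    rw [hτm] at hy'
    exact hy'.2
  · refine (hw x (hlast _ hx)).lt_of_ne' fun h => hxm ?_
    rw [hτm]
    exact ⟨hlast _ hx, h⟩
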